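/- Let ε > 0 and K ≥ 1. Define a₁ = 2ε and a_{k+1} = a_k/2 + (a_k/2)·√(1 + 4/a_k). Let F₁, …, F_K : [0,∞) → [0,1] be differentiable with F_k(0) = 1/2 for all k, F₁′(t) ≤ 2√(F₁(t))·√(1 − F₁(t)) for all t, and F_k′(t) ≤ 2√(max(F_{k−1}(t) − F_k(t), 0)) for all t and all 2 ≤ k ≤ K. Then for every 1 ≤ k ≤ K and every t ≥ 0, F_k(t) ≤ t²/a_k + (1 + ε)/2. -/
import Mathlib

/-- Fencing helper: everywhere-differentiable `f` on `[0,T]`, `B` with explicit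
derivative `B'`, strict derivative comparison at crossings. -/
lemma comp_aux (T : ℝ) (hT : 0 ≤ T) (f B B' : ℝ → ℝ)
    (hf : ∀ x ∈ Set.Icc (0:ℝ) T, DifferentiableAt ℝ f x)
    (hB : ∀ x, HasDerivAt B (B' x) x)
    (h0 : f 0 ≤ B 0)
    (hlt : ∀ x ∈ Set.Ico (0:ℝ) T, f x = B x → deriv f x < B' x) :
    f T ≤ B T := by
  have hcont : ContinuousOn f (Set.Icc 0 T) := fun x hx => (hf x hx).continuousAt.continuousWithinAt
  exact image_le_of_deriv_right_lt_deriv_boundary hcont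
    (fun x hx => ((hf x ⟨hx.1, le_of_lt hx.2⟩).hasDerivAt).hasDerivWithinAt)
    h0 hB hlt (Set.right_mem_Icc.2 hT)

lemma eps_limit {x y : ℝ} (h : ∀ δ : ℝ, 0 < δ → x ≤ y + δ) : x ≤ y := by
  by_contra hc
  push_neg at hc
  have := h ((x - y)/2) (by linarith)
  linarith

theorem stmt12 (ε : ℝ) (hε : 0 < ε) (K : ℕ) (hK : 1 ≤ K)
    (a : ℕ → ℝ) (ha1 : a 1 = 2 * ε)
    (harec : ∀ k, 1 ≤ k → a (k + 1) = a k / 2 + (a k / 2) * Real.sqrt (1 + 4 / a k))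
    (F : ℕ → ℝ → ℝ)
    (hrange : ∀ k, 1 ≤ k → k ≤ K → ∀ t, 0 ≤ t → F k t ∈ Set.Icc (0 : ℝ) 1)
    (hinit : ∀ k, 1 ≤ k → k ≤ K → F k 0 = 1 / 2)
    (hdiff : ∀ k, 1 ≤ k → k ≤ K → ∀ t, 0 ≤ t → DifferentiableAt ℝ (F k) t)
    (h1 : ∀ t, 0 ≤ t →
      deriv (F 1) t ≤ 2 * Real.sqrt (F 1 t) * Real.sqrt (1 - F 1 t))
    (hk : ∀ k, 2 ≤ k → k ≤ K → ∀ t, 0 ≤ t →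
      deriv (F k) t ≤ 2 * Real.sqrt (max (F (k - 1) t - F k t) 0)) :
    ∀ k, 1 ≤ k → k ≤ K → ∀ t, 0 ≤ t → F k t ≤ t ^ 2 / a k + (1 + ε) / 2 := by
  -- positivity of a
  have hapos : ∀ k, 1 ≤ k → 0 < a k := by
    intro k hk1
    induction k with
    | zero => omega
    | succ n ih =>
      rcases Nat.eq_zero_or_pos n with h | h
      · subst h; rw [ha1]; linarith
      · have hpos := ih h
        rw [harec n h]
        have hs : (1:ℝ) ≤ Real.sqrt (1 + 4 / a n) := by
          have h4 : (0:ℝ) < 4 / a n := by positivity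
          have := Real.sqrt_le_sqrt (show (1:ℝ) ≤ 1 + 4 / a n by linarith)
          simpa using this
        nlinarith
  -- key quadratic identity
  have hsq : ∀ k, 1 ≤ k → a (k+1) ^ 2 = a k * a (k+1) + a k := by
    intro k hk1
    have hpos := hapos k hk1
    have hs2 : a k * Real.sqrt (1 + 4 / a k) ^ 2 = a k + 4 := by
      rw [Real.sq_sqrt (by positivity)]
      field_simp
    rw [harec k hk1]
    linear_combination (a k / 4) * hs2
  intro k
  induction k with
  | zero => omega
  | succ n ih =>
    intro _ hkK T hT
    match n, ih with
    | 0, _ =>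
      -- base case k = 1
      have key : ∀ δ : ℝ, 0 < δ → F 1 T ≤ T + 1/2 + δ := by
        intro δ hδ
        have := comp_aux T hT (F 1) (fun x => x + 1/2 + δ) (fun _ => 1)
          (fun x hx => hdiff 1 le_rfl hK x hx.1)
          (fun x => by simpa using ((hasDerivAt_id x).add_const (1/2:ℝ)).add_const δ)
          (by
            show F 1 0 ≤ 0 + 1/2 + δ
            rw [hinit 1 le_rfl hK]; linarith)
          ?_
        · exact this
        intro x hx hcross
        have hcross' : F 1 x = x + 1/2 + δ := hcross
        have hx0 : 0 ≤ x := hx.1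
        have hF := hrange 1 le_rfl hK x hx0
        have hFgt : F 1 x > 1/2 := by rw [hcross']; linarith
        have hmul : Real.sqrt (F 1 x) * Real.sqrt (1 - F 1 x)
            = Real.sqrt (F 1 x * (1 - F 1 x)) := (Real.sqrt_mul hF.1 _).symm
        have hlt : F 1 x * (1 - F 1 x) < (1/2)^2 := by nlinarith [hF.2]
        have : Real.sqrt (F 1 x * (1 - F 1 x)) < 1/2 :=
          (Real.sqrt_lt' (by norm_num)).2 hlt
        calc deriv (F 1) x ≤ 2 * Real.sqrt (F 1 x) * Real.sqrt (1 - F 1 x) := h1 x hx0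
          _ = 2 * Real.sqrt (F 1 x * (1 - F 1 x)) := by rw [mul_assoc, hmul]
          _ < 1 := by linarith
      have h2 : F 1 T ≤ T + 1/2 := eps_limit key
      have h3 : T + 1/2 ≤ T^2 / a 1 + (1 + ε)/2 := by
        rw [ha1, ← sub_nonneg]
        have h2ε : (0:ℝ) < 2 * ε := by linarith
        have heq : T^2/(2*ε) + (1+ε)/2 - (T + 1/2) = (T-ε)^2/(2*ε) := by
          field_simp
          ring
        rw [heq]
        positivity
      linarith
    | (m+1), ih =>
      -- inductive step: k = m+2, previous index m+1
      have hm1 : 1 ≤ m + 1 := by omega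
      have hmK : m + 1 ≤ K := by omega
      have IH := ih hm1 hmK
      set p := m + 1 with hp
      have hap : 0 < a p := hapos p hm1
      have haq : 0 < a (p+1) := hapos (p+1) (by omega)
      have hquad := hsq p hm1
      have key : ∀ δ : ℝ, 0 < δ →
          F (p+1) T ≤ T^2 / a (p+1) + (1 + ε)/2 + δ := by
        intro δ hδ
        have := comp_aux T hT (F (p+1))
          (fun x => x^2 / a (p+1) + (1 + ε)/2 + δ)
          (fun x => 2 * x / a (p+1))
          (fun x hx => hdiff (p+1) (by omega) hkK x hx.1)
          (fun x => by
            have hd : HasDerivAt (fun x : ℝ => x^2) (2*x) x := by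
              simpa using hasDerivAt_pow 2 x
            exact ((hd.div_const (a (p+1))).add_const ((1 + ε)/2)).add_const δ)
          (by
            show F (p+1) 0 ≤ 0^2 / a (p+1) + (1 + ε)/2 + δ
            rw [hinit (p+1) (by omega) hkK,
              show (0:ℝ)^2 / a (p+1) = 0 from by simp]
            linarith)
          ?_
        · exact this
        intro x hx hcross
        have hcross' : F (p+1) x = x^2 / a (p+1) + (1 + ε)/2 + δ := hcross
        have hx0 : 0 ≤ x := hx.1
        have hxpos : 0 < x := by
          rcases lt_or_eq_of_le hx0 with h | h
          · exact h
          · exfalso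
            rw [← h] at hcross'
            rw [hinit (p+1) (by omega) hkK,
              show (0:ℝ)^2 / a (p+1) = 0 from by simp] at hcross'
            linarith
        have hIHx := IH x hx0
        have hdF := hk (p+1) (by omega) hkK x hx0
        have hsub : (p+1) - 1 = p := by omega
        rw [hsub] at hdF
        have hdiffb : F p x - F (p+1) x ≤ x^2 / (a (p+1))^2 - δ := by
          have hstep : F p x - F (p+1) x ≤ x^2 / a p - x^2 / a (p+1) - δ := by
            rw [hcross'] at *; linarith
          have h2 : x^2 / a p - x^2 / a (p+1) = x^2 / (a (p+1))^2 := by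
            rw [div_sub_div _ _ (ne_of_gt hap) (ne_of_gt haq),
              div_eq_div_iff (by positivity) (by positivity)]
            linear_combination (x^2 * a (p+1)) * hquad
          linarith [h2.le, h2.ge]
        set y := x / a (p+1) with hy
        have hypos : 0 < y := by positivity
        have hy2 : x^2 / (a (p+1))^2 = y^2 := by rw [hy]; ring
        have hmaxle : max (F p x - F (p+1) x) 0 ≤ max (y^2 - δ) 0 := by
          apply max_le_max _ le_rfl
          rw [← hy2]; exact hdiffb
        have hmaxlt : max (y^2 - δ) 0 < y^2 := by
          apply max_lt (by linarith) (by positivity)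
        have hs1 : Real.sqrt (max (F p x - F (p+1) x) 0) ≤ Real.sqrt (max (y^2 - δ) 0) :=
          Real.sqrt_le_sqrt hmaxle
        have hs2 : Real.sqrt (max (y^2 - δ) 0) < y :=
          (Real.sqrt_lt' hypos).2 hmaxlt
        calc deriv (F (p+1)) x ≤ 2 * Real.sqrt (max (F p x - F (p+1) x) 0) := hdF
          _ ≤ 2 * Real.sqrt (max (y^2 - δ) 0) := by linarith
          _ < 2 * y := by linarith
          _ = 2 * x / a (p+1) := by rw [hy]; ring
      exact eps_limit key
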